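/- arXiv:1412.2226 — 2 statements merged into one kernel-verified Lean document; each statement's English description precedes it below -/
import Mathlib

section
/- An allocation M is the outcome of every balanced policy if and only if, for every agent a_j, M allocates to a_j exactly her k most preferred items in I (so in particular the agents' top-k sets are pairwise disjoint and cover I). -/
open Finset
open scoped Classical

/-- The most preferred item of a nonempty finset w.r.t. a linear order
(greater means more preferred). -/
noncomputable def favorite {ι : Type} (L : LinearOrder ι) (S : Finset ι) (h : S.Nonempty) : ι :=
  @Finset.max' ι L S h

/-- Sequential allocation: process the turns in order; at each turn the agent whose
turn it is picks her most preferred item among the items not yet allocated.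
Returns the list of (agent, item) picks, in order. -/
noncomputable def seqAlloc {n : ℕ} {ι : Type} [DecidableEq ι]
    (P : Fin n → LinearOrder ι) : List (Fin n) → Finset ι → List (Fin n × ι)
  | [], _ => []
  | a :: rest, S =>
    if h : S.Nonempty then
      (a, favorite (P a) S h) :: seqAlloc P rest (S.erase (favorite (P a) S h))
    else []

/-- `M` is the outcome of the policy `π`: every item is picked by the agent that
`M` assigns it to. -/
def IsOutcome {n : ℕ} {ι : Type} [Fintype ι] [DecidableEq ι]
    (P : Fin n → LinearOrder ι) (π : List (Fin n)) (M : ι → Fin n) : Prop :=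
  ∀ o : ι, (M o, o) ∈ seqAlloc P π Finset.univ

/-- The set of items that agent `a` picks under the policy `π`. -/
noncomputable def receives {n : ℕ} {ι : Type} [Fintype ι] [DecidableEq ι]
    (P : Fin n → LinearOrder ι) (π : List (Fin n)) (a : Fin n) : Finset ι :=
  Finset.univ.filter (fun o => (a, o) ∈ seqAlloc P π Finset.univ)

/-- An allocation `M` is Pareto optimal if there is no bijection `f` of the items such
that every agent weakly prefers `f o` to `o` for each item `o` she gets, with at least
one strict preference. -/
def ParetoOptimal {n : ℕ} {ι : Type} (P : Fin n → LinearOrder ι) (M : ι → Fin n) : Prop :=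
  ¬ ∃ f : ι ≃ ι, (∀ o : ι, (P (M o)).le o (f o)) ∧ (∃ o : ι, (P (M o)).lt o (f o))

/-- A policy is balanced if every agent has exactly `k` turns. -/
def BalancedPolicy {n : ℕ} (k : ℕ) (π : List (Fin n)) : Prop :=
  ∀ a : Fin n, π.count a = k

/-- An allocation is balanced if every agent receives exactly `k` items. -/
def BalancedAlloc {n : ℕ} {ι : Type} [Fintype ι] (k : ℕ) (M : ι → Fin n) : Prop :=
  ∀ a : Fin n, (Finset.univ.filter (fun o => M o = a)).card = k

/-- A policy is recursively balanced if it splits into `k` consecutive rounds of `n`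
turns each, every agent having exactly one turn in each round. -/
def RecBalanced (n k : ℕ) (π : List (Fin n)) : Prop :=
  ∃ rounds : List (List (Fin n)), rounds.length = k ∧
    (∀ r ∈ rounds, r.length = n ∧ ∀ a : Fin n, r.count a = 1) ∧
    π = rounds.flatten

/-- A strict alternation policy: every one of the `k` rounds uses the same order `σ`
over the agents. -/
def StrictAlt (n k : ℕ) (π : List (Fin n)) : Prop :=
  ∃ σ : List (Fin n), σ.length = n ∧ (∀ a : Fin n, σ.count a = 1) ∧
    π = (List.replicate k σ).flatten

/-- A balanced alternation policy: odd-numbered rounds use the order `σ` over the agents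
and even-numbered rounds use its reverse. -/
def BalAlt (n k : ℕ) (π : List (Fin n)) : Prop :=
  ∃ σ : List (Fin n), σ.length = n ∧ (∀ a : Fin n, σ.count a = 1) ∧
    π = ((List.range k).map (fun r => if r % 2 = 0 then σ else σ.reverse)).flatten

/-- `p j i` (for `1 ≤ i ≤ k`) is the item ranked `i`-th by agent `j` among the items `M`
allocates to `j`: it is allocated to `j`, and exactly `i - 1` of the items allocated
to `j` are strictly preferred to it by agent `j`. -/
def IsRankingOf {n : ℕ} {ι : Type} [Fintype ι] (P : Fin n → LinearOrder ι) (k : ℕ)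
    (M : ι → Fin n) (p : Fin n → ℕ → ι) : Prop :=
  ∀ (j : Fin n) (i : ℕ), 1 ≤ i → i ≤ k →
    M (p j i) = j ∧
    (Finset.univ.filter (fun o => M o = j ∧ (P j).lt (p j i) o)).card = i - 1

/-- Condition 3: for all `1 ≤ t < s ≤ k` and all agents `j, j'`, agent `j` strictly
prefers `p j t` to `p j' s`. -/
def Cond3 {n : ℕ} {ι : Type} (P : Fin n → LinearOrder ι) (k : ℕ) (p : Fin n → ℕ → ι) : Prop :=
  ∀ t s : ℕ, 1 ≤ t → t < s → s ≤ k → ∀ j j' : Fin n, (P j).lt (p j' s) (p j t)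

/-- The edge relation of the directed graph `G_M`: for odd `i ≤ k` an edge `a → b`
whenever `b` strictly prefers `p a i` to `p b i`, and for even `i ≤ k` an edge `a → b`
whenever `a` strictly prefers `p b i` to `p a i`. -/
def GM {n : ℕ} {ι : Type} (P : Fin n → LinearOrder ι) (k : ℕ) (p : Fin n → ℕ → ι)
    (a b : Fin n) : Prop :=
  (∃ i : ℕ, 1 ≤ i ∧ i ≤ k ∧ i % 2 = 1 ∧ (P b).lt (p b i) (p a i)) ∨
  (∃ i : ℕ, 1 ≤ i ∧ i ≤ k ∧ i % 2 = 0 ∧ (P a).lt (p a i) (p b i))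

/-- The edge relation of the directed graph `H_M`: for each `i ≤ k` an edge `a → b`
whenever `b` strictly prefers `p a i` to `p b i`. -/
def HM {n : ℕ} {ι : Type} (P : Fin n → LinearOrder ι) (k : ℕ) (p : Fin n → ℕ → ι)
    (a b : Fin n) : Prop :=
  ∃ i : ℕ, 1 ≤ i ∧ i ≤ k ∧ (P b).lt (p b i) (p a i)

/-- The `k` most preferred items of agent `j`: those items with fewer than `k` items
strictly preferred to them by `j`. -/
noncomputable def topItems {n : ℕ} {ι : Type} [Fintype ι] (P : Fin n → LinearOrder ι)
    (k : ℕ) (j : Fin n) : Finset ι :=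
  Finset.univ.filter (fun o => (Finset.univ.filter (fun o' => (P j).lt o o')).card < k)

/-- The rank of item `o` in agent `j`'s preference (the most preferred item has rank 1). -/
noncomputable def rankOf {n : ℕ} {ι : Type} [Fintype ι] (P : Fin n → LinearOrder ι)
    (j : Fin n) (o : ι) : ℕ :=
  (Finset.univ.filter (fun o' => (P j).lt o o')).card + 1

/-!
If `M` is the outcome of every balanced policy, then for each agent `j` it is the outcome of
the policy in which `j` takes her `k` turns first, so `M` gives `j` her top `k` items; as these
sets have `k` elements each and `|I| = k n`, they are exactly the bundles of `M`. Conversely, if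
the bundles are the top-`k` sets, each bundle is an upper set of its owner's preference, so at
every turn the picking agent still finds one of her own remaining items and takes an item of her
own bundle; a balanced policy has `k n = |I|` turns, so every item is taken, each by its owner.
-/

theorem List.count_flatMap_replicate {α : Type*} [DecidableEq α] (k : ℕ) (a : α)
    (l : List α) :
    (l.flatMap (List.replicate k)).count a = k * l.count a := by
  induction l with
  | nil => simp
  | cons b l ih => simp [List.count_cons, List.count_replicate, ih]; split_ifs <;> ring

theorem card_filter_card_filter_lt_lt {α : Type*} [Fintype α] [LinearOrder α] {k : ℕ}
    (hk : k ≤ Fintype.card α) : #{a : α | #{b | a < b} < k} = k := by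
  -- `e` enumerates `α` in decreasing order, so `e a` counts the elements above `a`.
  let e : α ≃ Fin (Fintype.card α) := OrderDual.toDual.trans
    (Fintype.orderIsoFinOfCardEq αᵒᵈ (Fintype.card_orderDual α)).symm.toEquiv
  have he : ∀ a b, e b < e a ↔ a < b := fun a b => by simp [e]
  have rank : ∀ a, #{b | a < b} = e a := fun a => by
    rw [← Fin.card_Iio]; exact card_equiv e (by simp [he])
  calc #{a : α | #{b | a < b} < k} = #{x : Fin (Fintype.card α) | (x : ℕ) < k} :=
        card_equiv e (by simp [rank])
    _ = k := by rw [Fin.card_filter_val_lt, min_eq_right hk]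

theorem filter_eq_of_subset_of_card_le_sum {ι β : Type*} [Fintype ι] [Fintype β]
    [DecidableEq β]
    {M : ι → β} {T : β → Finset ι} (hT : ∀ b, T b ⊆ ({o | M o = b} : Finset ι))
    (hcard : Fintype.card ι ≤ ∑ b, #(T b)) (b : β) : ({o | M o = b} : Finset ι) = T b := by
  have hle : ∀ b ∈ univ, #(T b) ≤ #{o | M o = b} := fun b _ => card_le_card (hT b)
  have hsum : ∑ b, #(T b) = ∑ b, #{o | M o = b} := by
    refine le_antisymm (sum_le_sum hle) ?_
    rwa [← card_eq_sum_card_fiberwise (fun o _ => mem_univ (M o))]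
  exact (eq_of_subset_of_card_le (hT b) ((sum_eq_sum_iff_of_le hle).1 hsum b (mem_univ b)).ge).symm

theorem favorite_mem {ι : Type} (L : LinearOrder ι) (S : Finset ι) (h : S.Nonempty) :
    favorite L S h ∈ S :=
  @max'_mem ι L S h

theorem favorite_le {ι : Type} (L : LinearOrder ι) {S : Finset ι} (h : S.Nonempty) {o : ι}
    (ho : o ∈ S) : L.le o (favorite L S h) :=
  @le_max' ι L S o ho

section SequentialAllocation

variable {n : ℕ} {ι : Type} [DecidableEq ι] (P : Fin n → LinearOrder ι)

theorem mem_of_mem_seqAlloc {π : List (Fin n)} {S : Finset ι} {a : Fin n} {o : ι}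
    (h : (a, o) ∈ seqAlloc P π S) : o ∈ S := by
  induction π generalizing S with
  | nil => simp [seqAlloc] at h
  | cons b π ih =>
    rw [seqAlloc] at h
    split_ifs at h with hS
    · rcases List.mem_cons.1 h with h | h
      · cases h; exact favorite_mem _ _ _
      · exact mem_of_mem_erase (ih h)
    · simp at h

theorem agent_eq_of_mem_seqAlloc {π : List (Fin n)} {S : Finset ι} {a b : Fin n} {o : ι}
    (ha : (a, o) ∈ seqAlloc P π S) (hb : (b, o) ∈ seqAlloc P π S) : a = b := by
  induction π generalizing S with
  | nil => simp [seqAlloc] at ha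
  | cons c π ih =>
    rw [seqAlloc] at ha hb
    split_ifs at ha hb with hS
    · simp only [List.mem_cons, Prod.mk.injEq] at ha hb
      rcases ha with ⟨rfl, rfl⟩ | ha <;> rcases hb with ⟨rfl, hfav⟩ | hb
      · rfl
      · exact absurd (mem_of_mem_seqAlloc P hb) (notMem_erase _ _)
      · exact absurd (hfav ▸ mem_of_mem_seqAlloc P ha) (notMem_erase _ _)
      · exact ih ha hb
    · simp at ha

theorem exists_mem_seqAlloc {π : List (Fin n)} {S : Finset ι} {o : ι} (ho : o ∈ S)
    (hlen : #S ≤ π.length) : ∃ a, (a, o) ∈ seqAlloc P π S := by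
  induction π generalizing S with
  | nil => simp_all
  | cons b π ih =>
    have hS : S.Nonempty := ⟨o, ho⟩
    rw [seqAlloc, dif_pos hS]
    by_cases hfav : o = favorite (P b) S hS
    · exact ⟨b, hfav ▸ List.mem_cons_self⟩
    · have hlen' : #(S.erase (favorite (P b) S hS)) ≤ π.length := by
        rw [card_erase_of_mem (favorite_mem _ _ _)]
        simp only [List.length_cons] at hlen
        omega
      obtain ⟨a, ha⟩ := ih (mem_erase.2 ⟨hfav, ho⟩) hlen'
      exact ⟨a, List.mem_cons_of_mem _ ha⟩

theorem mem_seqAlloc_replicate_append (j : Fin n) (τ : List (Fin n)) {c : ℕ} {S : Finset ι}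
    {o : ι} (ho : o ∈ S) (hc : #{o' ∈ S | (P j).lt o o'} < c) :
    (j, o) ∈ seqAlloc P (List.replicate c j ++ τ) S := by
  induction c generalizing S with
  | zero => omega
  | succ c ih =>
    have hS : S.Nonempty := ⟨o, ho⟩
    rw [List.replicate_succ, List.cons_append, seqAlloc, dif_pos hS]
    set fav := favorite (P j) S hS
    by_cases hfav : o = fav
    · exact hfav ▸ List.mem_cons_self
    · have hlt : (P j).lt o fav :=
        @lt_of_le_of_ne ι (P j).toPartialOrder _ _ (favorite_le _ hS ho) hfav
      have hmem : fav ∈ ({o' ∈ S | (P j).lt o o'} : Finset ι) :=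
        mem_filter.2 ⟨favorite_mem _ _ _, hlt⟩
      refine List.mem_cons_of_mem _ (ih (mem_erase.2 ⟨hfav, ho⟩) ?_)
      have hpos := card_pos.2 ⟨fav, hmem⟩
      rw [filter_erase, card_erase_of_mem hmem]
      omega

theorem eq_of_mem_seqAlloc {M : ι → Fin n} (hM : ∀ o o', (P (M o)).le o o' → M o' = M o)
    {π : List (Fin n)} {S : Finset ι} (hcount : ∀ a, π.count a ≤ #{o ∈ S | M o = a})
    {a : Fin n} {o : ι} (h : (a, o) ∈ seqAlloc P π S) : M o = a := by
  induction π generalizing S with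
  | nil => simp [seqAlloc] at h
  | cons b π ih =>
    rw [seqAlloc] at h
    split_ifs at h with hS
    · set fav := favorite (P b) S hS
      have hfav : M fav = b := by
        obtain ⟨t, ht⟩ : ({o ∈ S | M o = b} : Finset ι).Nonempty :=
          card_pos.1 (lt_of_lt_of_le (by simp) (hcount b))
        obtain ⟨htS, rfl⟩ := mem_filter.1 ht
        exact hM t fav (favorite_le _ hS htS)
      rcases List.mem_cons.1 h with h | h
      · obtain ⟨rfl, rfl⟩ := Prod.mk.inj h
        exact hfav
      · refine ih (fun c => ?_) h
        have := hcount c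
        rw [List.count_cons] at this
        rw [filter_erase, card_erase_eq_ite]
        by_cases hbc : b = c
        · subst hbc
          rw [if_pos (mem_filter.2 ⟨favorite_mem _ _ _, hfav⟩)]
          simp only [beq_self_eq_true, if_true] at this
          omega
        · rw [if_neg (show fav ∉ ({o ∈ S | M o = c} : Finset ι) from
            fun h => hbc (hfav.symm.trans (mem_filter.1 h).2))]
          simpa [hbc] using this
    · simp at h

end SequentialAllocation

theorem BalancedPolicy.length_eq {n k : ℕ} {π : List (Fin n)} (h : BalancedPolicy k π) :
    π.length = n * k := by
  rw [← Multiset.coe_card, ← Multiset.sum_count_eq_card (s := univ) (fun a _ => mem_univ a)]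
  simp [show ∀ a, π.count a = k from h]

theorem exists_balancedPolicy_replicate_append {n : ℕ} (k : ℕ) (j : Fin n) :
    ∃ τ : List (Fin n), BalancedPolicy k (List.replicate k j ++ τ) := by
  refine ⟨((List.finRange n).erase j).flatMap (List.replicate k), fun a => ?_⟩
  rw [← List.flatMap_cons, List.count_flatMap_replicate,
    ((List.perm_cons_erase (List.mem_finRange j)).count_eq a).symm, List.count_finRange, mul_one]

section TopItems

variable {n : ℕ} {ι : Type} [Fintype ι] (P : Fin n → LinearOrder ι) (k : ℕ)

theorem card_topItems (j : Fin n) (hk : k ≤ Fintype.card ι) : #(topItems P k j) = k := by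
  let := P j
  unfold topItems
  convert card_filter_card_filter_lt_lt hk

theorem mem_topItems_of_le {j : Fin n} {o o' : ι} (ho : o ∈ topItems P k j) (h : (P j).le o o') :
    o' ∈ topItems P k j := by
  let := P j
  simp only [topItems, mem_filter, mem_univ, true_and] at ho ⊢
  refine lt_of_le_of_lt (card_le_card fun x hx => ?_) ho
  simp only [mem_filter, mem_univ, true_and] at hx ⊢
  exact lt_of_le_of_lt h hx

end TopItems

theorem necessary_assignment_balanced_general
    {ι : Type} [Fintype ι] [DecidableEq ι] {n k : ℕ}
    (hcard : Fintype.card ι = k * n)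
    (P : Fin n → LinearOrder ι) (M : ι → Fin n) :
    (∀ π : List (Fin n), BalancedPolicy k π → IsOutcome P π M) ↔
      ∀ j : Fin n, (Finset.univ.filter (fun o => M o = j)) = topItems P k j := by
  have card_top (j : Fin n) : #(topItems P k j) = k :=
    card_topItems P k j (hcard ▸ Nat.le_mul_of_pos_right k j.pos)
  constructor
  · intro H
    have top_sub (j : Fin n) : topItems P k j ⊆ ({o | M o = j} : Finset ι) := fun o ho => by
      obtain ⟨τ, hτ⟩ := exists_balancedPolicy_replicate_append k j
      have hj := mem_seqAlloc_replicate_append P j τ (mem_univ o) (mem_filter.1 ho).2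
      simpa using agent_eq_of_mem_seqAlloc P (H _ hτ o) hj
    exact filter_eq_of_subset_of_card_le_sum top_sub (by simp [card_top, hcard, mul_comm])
  · intro H π hπ o
    have hup (o o' : ι) (h : (P (M o)).le o o') : M o' = M o := by
      have ho : o ∈ topItems P k (M o) := H (M o) ▸ mem_filter.2 ⟨mem_univ o, rfl⟩
      simpa [← H] using mem_topItems_of_le P k ho h
    obtain ⟨a, ha⟩ := exists_mem_seqAlloc P (mem_univ o)
      (by rw [card_univ, hcard, hπ.length_eq, mul_comm])
    rwa [eq_of_mem_seqAlloc P hup (fun a => by simp [H a, card_top, hπ a]) ha]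

/-- An allocation `M` is the outcome of every balanced policy if and only
if every agent receives exactly her `k` most preferred items. -/
theorem necessary_assignment_balanced
    {ι : Type} [Fintype ι] [DecidableEq ι] {n k : ℕ} (hn : 0 < n) (hk : 1 ≤ k)
    (hcard : Fintype.card ι = k * n)
    (P : Fin n → LinearOrder ι) (M : ι → Fin n) :
    (∀ π : List (Fin n), BalancedPolicy k π → IsOutcome P π M) ↔
      ∀ j : Fin n, (Finset.univ.filter (fun o => M o = j)) = topItems P k j :=
  necessary_assignment_balanced_general hcard P M
end

section
/- Let M be a balanced allocation. M is the outcome of every strict alternation policy if and only if for every round index t with 1 ≤ t ≤ k and every agent a_j, the item p_j^t is agent a_j's most preferred item among the items of I not contained in { p_{j'}^i : 1 ≤ j' ≤ n, 1 ≤ i < t } (the items M allocates in earlier rounds). -/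
open Finset
open scoped Classical

/-!
Call round `t` greedy if every agent's `t`-th item `p j t` is her favourite among the items
that `M` does not hand out in earlier rounds. If rounds `1, …, m` are greedy, then under any
strict alternation policy agent `j` picks exactly `p j i` in round `i ≤ m`, whatever the order
of the agents; so if all rounds are greedy, `M` is the outcome. Conversely, let agent `j` move
first in every round. If the rounds before `t` are greedy, at round `t` she takes her favourite
remaining item; since `M` is the outcome, this item is hers and not yet handed out, hence of the
form `p j i` with `i ≥ t`, so she ranks it no higher than `p j t`. By strong induction every
round is greedy.
-/

section Favorite

variable {ι : Type} (L : LinearOrder ι) {S : Finset ι} (hS : S.Nonempty)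

theorem favorite_mem_s7 : favorite L S hS ∈ S := @Finset.max'_mem ι L S hS

theorem le_favorite {o : ι} (ho : o ∈ S) : L.le o (favorite L S hS) :=
  @Finset.le_max' ι L S o ho

theorem favorite_eq_of_forall_le {x : ι} (hx : x ∈ S) (hle : ∀ o ∈ S, L.le o x) :
    favorite L S hS = x :=
  L.le_antisymm _ _ (hle _ (favorite_mem_s7 L hS)) (le_favorite L hS hx)

end Favorite

section SeqAlloc

variable {ι : Type} [DecidableEq ι] {n : ℕ} (P : Fin n → LinearOrder ι)

theorem snd_mem_of_mem_seqAlloc :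
    ∀ {l : List (Fin n)} {S : Finset ι} {q : Fin n × ι}, q ∈ seqAlloc P l S → q.2 ∈ S
  | [], _, _ => by simp [seqAlloc]
  | a :: l, S, q => by
    rw [seqAlloc]
    split_ifs with hS
    · intro hq
      rcases List.mem_cons.1 hq with rfl | hq
      · exact favorite_mem_s7 (P a) hS
      · exact Finset.mem_of_mem_erase (snd_mem_of_mem_seqAlloc hq)
    · simp

theorem nodup_map_snd_seqAlloc :
    ∀ (l : List (Fin n)) (S : Finset ι), ((seqAlloc P l S).map Prod.snd).Nodup
  | [], _ => by simp [seqAlloc]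
  | a :: l, S => by
    rw [seqAlloc]
    split_ifs with hS
    · refine List.nodup_cons.2 ⟨fun hmem => ?_, nodup_map_snd_seqAlloc l _⟩
      obtain ⟨q, hq, hq2⟩ := List.mem_map.1 hmem
      exact Finset.ne_of_mem_erase (hq2 ▸ snd_mem_of_mem_seqAlloc P hq) rfl
    · simp

theorem eq_of_mem_seqAlloc_s7 {l : List (Fin n)} {S : Finset ι} {a b : Fin n} {x : ι}
    (ha : (a, x) ∈ seqAlloc P l S) (hb : (b, x) ∈ seqAlloc P l S) : a = b :=
  congrArg Prod.fst (List.inj_on_of_nodup_map (nodup_map_snd_seqAlloc P l S) ha hb rfl)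

theorem seqAlloc_append_of_forall_le (f : Fin n → ι) (rest : List (Fin n)) :
    ∀ {l : List (Fin n)} {S : Finset ι}, (l.map f).Nodup → (∀ a ∈ l, f a ∈ S) →
      (∀ a ∈ l, ∀ o ∈ S, (P a).le o (f a)) →
      seqAlloc P (l ++ rest) S =
        l.map (fun a => (a, f a)) ++ seqAlloc P rest (S \ (l.map f).toFinset)
  | [], _, _, _, _ => by simp
  | a :: l, S, hnodup, hmem, hle => by
    have hS : S.Nonempty := ⟨f a, hmem a List.mem_cons_self⟩
    have hfav : favorite (P a) S hS = f a :=
      favorite_eq_of_forall_le _ _ (hmem a List.mem_cons_self) (hle a List.mem_cons_self)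
    obtain ⟨hfa, hnodup'⟩ := List.nodup_cons.1 hnodup
    have hrest := seqAlloc_append_of_forall_le f rest (S := S.erase (f a)) hnodup'
      (fun b hb => Finset.mem_erase.2
        ⟨fun h => hfa (h ▸ List.mem_map_of_mem hb), hmem b (List.mem_cons_of_mem a hb)⟩)
      (fun b hb o ho => hle b (List.mem_cons_of_mem a hb) o (Finset.mem_of_mem_erase ho))
    have hpool : S.erase (f a) \ (l.map f).toFinset = S \ ((a :: l).map f).toFinset := by
      ext o
      simp only [Finset.mem_sdiff, Finset.mem_erase, List.map_cons, List.toFinset_cons,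
        Finset.mem_insert, List.mem_toFinset]
      tauto
    rw [List.cons_append, seqAlloc, dif_pos hS, hfav, hrest, hpool]
    rfl

end SeqAlloc

section Rounds

variable {ι : Type} [DecidableEq ι] {n k : ℕ}

def picksBefore (p : Fin n → ℕ → ι) (t : ℕ) : Finset ι :=
  Finset.image (fun x : Fin n × ℕ => p x.1 x.2) (Finset.univ ×ˢ Finset.Ico 1 t)

def GreedyRound (P : Fin n → LinearOrder ι) (p : Fin n → ℕ → ι) (t : ℕ) : Prop :=
  ∀ (j : Fin n) (o : ι), o ∉ picksBefore p t → (P j).le o (p j t)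

variable (P : Fin n → LinearOrder ι) {p : Fin n → ℕ → ι}

theorem picksBefore_one : picksBefore p 1 = ∅ := by
  simp [picksBefore]

theorem mem_picksBefore {t : ℕ} {o : ι} :
    o ∈ picksBefore p t ↔ ∃ (j : Fin n) (i : ℕ), 1 ≤ i ∧ i < t ∧ p j i = o := by
  simp [picksBefore, and_assoc]

theorem notMem_picksBefore (hinj : Set.InjOn (Function.uncurry p) (Set.univ ×ˢ Set.Icc 1 k))
    (j : Fin n) {t : ℕ} (ht1 : 1 ≤ t) (htk : t ≤ k) : p j t ∉ picksBefore p t := by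
  rw [mem_picksBefore]
  rintro ⟨j', i, hi1, hit, hji⟩
  have := @hinj (j', i) ⟨trivial, hi1, by omega⟩ (j, t) ⟨trivial, ht1, htk⟩ hji
  simp only [Prod.mk.injEq] at this
  omega

variable [Fintype ι]

theorem univ_sdiff_picksBefore_sdiff_round {σ : List (Fin n)} (hσ : ∀ a, a ∈ σ) {t : ℕ}
    (ht : 1 ≤ t) :
    (Finset.univ \ picksBefore p t) \ (σ.map fun a => p a t).toFinset =
      Finset.univ \ picksBefore p (t + 1) := by
  ext o
  simp only [Finset.mem_sdiff, Finset.mem_univ, true_and, mem_picksBefore, List.mem_toFinset,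
    List.mem_map]
  constructor
  · rintro ⟨h, h'⟩ ⟨j, i, hi1, hit, rfl⟩
    rcases Nat.lt_succ_iff_lt_or_eq.1 hit with hit | rfl
    · exact h ⟨j, i, hi1, hit, rfl⟩
    · exact h' ⟨j, hσ j, rfl⟩
  · intro h
    exact ⟨fun ⟨j, i, hi1, hit, hji⟩ => h ⟨j, i, hi1, by omega, hji⟩,
      fun ⟨j, _, hj⟩ => h ⟨j, t, ht, by omega, hj⟩⟩

theorem seqAlloc_replicate_append
    (hinj : Set.InjOn (Function.uncurry p) (Set.univ ×ˢ Set.Icc 1 k))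
    {σ : List (Fin n)} (hσ : ∀ a, σ.count a = 1) (rest : List (Fin n)) :
    ∀ {m : ℕ}, m ≤ k → (∀ i, 1 ≤ i → i ≤ m → GreedyRound P p i) →
      seqAlloc P ((List.replicate m σ).flatten ++ rest) Finset.univ =
        (List.range' 1 m).flatMap (fun i => σ.map fun a => (a, p a i)) ++
          seqAlloc P rest (Finset.univ \ picksBefore p (m + 1))
  | 0, _, _ => by simp [picksBefore_one]
  | m + 1, hm, hgreedy => by
    have hσnodup : σ.Nodup := List.nodup_iff_count_le_one.2 fun a => (hσ a).le
    have hσmem : ∀ a, a ∈ σ := fun a => List.count_pos_iff.1 (by rw [hσ a]; omega)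
    have hround := seqAlloc_append_of_forall_le P (fun a => p a (m + 1)) rest
      (S := Finset.univ \ picksBefore p (m + 1))
      (hσnodup.map fun a b hab => congrArg Prod.fst
        (@hinj (a, m + 1) ⟨trivial, by omega, hm⟩ (b, m + 1) ⟨trivial, by omega, hm⟩ hab))
      (fun a _ => Finset.mem_sdiff.2
        ⟨Finset.mem_univ _, notMem_picksBefore hinj a (by omega) hm⟩)
      (fun a _ o ho => hgreedy (m + 1) (by omega) le_rfl a o (Finset.mem_sdiff.1 ho).2)
    rw [univ_sdiff_picksBefore_sdiff_round hσmem (by omega)] at hround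
    rw [List.replicate_succ', List.flatten_append, List.flatten_singleton, List.append_assoc,
      seqAlloc_replicate_append hinj hσ (σ ++ rest) (by omega)
        (fun i hi1 him => hgreedy i hi1 (by omega)),
      hround, List.range'_1_concat, List.flatMap_append, List.append_assoc, Nat.add_comm 1 m]
    simp

end Rounds

section Ranking

variable {ι : Type} [Fintype ι] {n k : ℕ} {P : Fin n → LinearOrder ι} {M : ι → Fin n}
  {p : Fin n → ℕ → ι}

theorem IsRankingOf.lt_of_lt (hp : IsRankingOf P k M p) (j : Fin n) {a b : ℕ} (ha : 1 ≤ a)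
    (hab : a < b) (hb : b ≤ k) : (P j).lt (p j b) (p j a) := by
  let _ := P j
  by_contra hba
  have hsub : (Finset.univ.filter fun o => M o = j ∧ p j b < o) ⊆
      Finset.univ.filter fun o => M o = j ∧ p j a < o := by
    intro o
    simp only [Finset.mem_filter, Finset.mem_univ, true_and]
    exact fun ⟨hMo, hbo⟩ => ⟨hMo, lt_of_le_of_lt (not_lt.1 hba) hbo⟩
  have hcard := Finset.card_le_card hsub
  rw [(hp j b (by omega) hb).2, (hp j a ha (by omega)).2] at hcard
  omega

theorem IsRankingOf.injOn (hp : IsRankingOf P k M p) :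
    Set.InjOn (Function.uncurry p) (Set.univ ×ˢ Set.Icc 1 k) := by
  rintro ⟨a, i⟩ ⟨-, hi1, hik⟩ ⟨b, l⟩ ⟨-, hl1, hlk⟩ h
  simp only [Function.uncurry_apply_pair] at h
  obtain rfl : a = b := by rw [← (hp a i hi1 hik).1, ← (hp b l hl1 hlk).1, h]
  congr 1
  by_contra hil
  rcases Nat.lt_or_gt_of_ne hil with hil | hil
  · exact @ne_of_lt _ (P a).toPreorder _ _ (hp.lt_of_lt a hi1 hil hlk) h.symm
  · exact @ne_of_lt _ (P a).toPreorder _ _ (hp.lt_of_lt a hl1 hil hik) h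

/-- The `k * n` items `p j i` are distinct, so they exhaust all `k * n` items. -/
theorem IsRankingOf.exists_eq (hp : IsRankingOf P k M p) (hcard : Fintype.card ι = k * n)
    (o : ι) : ∃ (j : Fin n) (i : ℕ), 1 ≤ i ∧ i ≤ k ∧ p j i = o := by
  have himage : (Finset.univ ×ˢ Finset.Icc 1 k).image (Function.uncurry p) = Finset.univ := by
    apply Finset.eq_univ_of_card
    rw [Finset.card_image_of_injOn (by simpa using hp.injOn), Finset.card_product,
      Finset.card_univ, Fintype.card_fin, Nat.card_Icc, hcard, Nat.add_sub_cancel, mul_comm]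
  obtain ⟨⟨j, i⟩, hji, rfl⟩ := Finset.mem_image.1 (himage ▸ Finset.mem_univ o)
  simp only [Finset.mem_product, Finset.mem_univ, Finset.mem_Icc, true_and] at hji
  exact ⟨j, i, hji.1, hji.2, rfl⟩

end Ranking

section StrictAlternation

variable {ι : Type} [Fintype ι] [DecidableEq ι] {n k : ℕ} {P : Fin n → LinearOrder ι}
  {M : ι → Fin n} {p : Fin n → ℕ → ι}

theorem count_cons_erase_finRange (j a : Fin n) :
    (j :: (List.finRange n).erase j).count a = 1 := by
  rw [List.count_cons, List.count_erase,
    List.count_eq_one_of_mem (List.nodup_finRange n) (List.mem_finRange a)]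
  by_cases h : j = a <;> simp [h]

theorem strictAlt_replicate_cons_erase_finRange (j : Fin n) :
    StrictAlt n k (List.replicate k (j :: (List.finRange n).erase j)).flatten := by
  refine ⟨_, ?_, count_cons_erase_finRange j, rfl⟩
  rw [List.length_cons, List.length_erase_of_mem (List.mem_finRange j), List.length_finRange]
  have := j.pos
  omega

theorem isOutcome_of_forall_greedyRound (hp : IsRankingOf P k M p)
    (hcard : Fintype.card ι = k * n) {σ : List (Fin n)} (hσ : ∀ a, σ.count a = 1)
    (hgreedy : ∀ t, 1 ≤ t → t ≤ k → GreedyRound P p t) :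
    IsOutcome P (List.replicate k σ).flatten M := by
  intro o
  obtain ⟨j, i, hi1, hik, rfl⟩ := hp.exists_eq hcard o
  have hall := seqAlloc_replicate_append P hp.injOn hσ [] le_rfl hgreedy
  rw [List.append_nil] at hall
  rw [(hp j i hi1 hik).1, hall]
  refine List.mem_append_left _ (List.mem_flatMap.2 ⟨i, ?_, List.mem_map_of_mem ?_⟩)
  · rw [List.mem_range'_1]
    omega
  · exact List.count_pos_iff.1 (by rw [hσ j]; omega)

theorem greedyRound_of_forall_strictAlt_isOutcome (hp : IsRankingOf P k M p)
    (hcard : Fintype.card ι = k * n) (hout : ∀ π, StrictAlt n k π → IsOutcome P π M) {t : ℕ}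
    (ht1 : 1 ≤ t) (htk : t ≤ k) (hprev : ∀ i, 1 ≤ i → i < t → GreedyRound P p i) :
    GreedyRound P p t := by
  intro j o ho
  set σ := j :: (List.finRange n).erase j
  have hpolicy : (List.replicate k σ).flatten = (List.replicate (t - 1) σ).flatten ++
      j :: ((List.finRange n).erase j ++ (List.replicate (k - t) σ).flatten) := by
    conv_lhs => rw [show k = (t - 1) + (k - t + 1) by omega]
    rw [List.replicate_add, List.flatten_append, List.replicate_succ, List.flatten_cons]
    rfl
  have hS : (Finset.univ \ picksBefore p t).Nonempty := ⟨o, by simpa using ho⟩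
  set x := favorite (P j) _ hS
  have hjx : (j, x) ∈ seqAlloc P (List.replicate k σ).flatten Finset.univ := by
    rw [hpolicy, seqAlloc_replicate_append P hp.injOn (count_cons_erase_finRange j) _
      (by omega) (fun i hi1 hit => hprev i hi1 (by omega)), Nat.sub_add_cancel ht1, seqAlloc,
      dif_pos hS]
    exact List.mem_append_right _ List.mem_cons_self
  have hMx : M x = j :=
    eq_of_mem_seqAlloc_s7 P (hout _ (strictAlt_replicate_cons_erase_finRange j) x) hjx
  obtain ⟨j', i, hi1, hik, hx⟩ := hp.exists_eq hcard x
  obtain rfl : j' = j := by rw [← hMx, ← hx, (hp j' i hi1 hik).1]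
  have hti : t ≤ i := by
    by_contra hit
    exact (Finset.mem_sdiff.1 (favorite_mem_s7 _ hS)).2
      (mem_picksBefore.2 ⟨j', i, hi1, by omega, hx⟩)
  let _ := P j'
  have hxt : x ≤ p j' t := by
    rw [← hx]
    rcases hti.eq_or_lt with rfl | hti
    · exact le_rfl
    · exact (hp.lt_of_lt j' ht1 hti hik).le
  exact (le_favorite (P j') hS (by simpa using ho)).trans hxt

end StrictAlternation

theorem necessary_assignment_strict_alternation_general
    {ι : Type} [Fintype ι] [DecidableEq ι] {n k : ℕ}
    (hcard : Fintype.card ι = k * n)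
    (P : Fin n → LinearOrder ι) (M : ι → Fin n)
    (p : Fin n → ℕ → ι) (hp : IsRankingOf P k M p) :
    (∀ π : List (Fin n), StrictAlt n k π → IsOutcome P π M) ↔
      ∀ t : ℕ, 1 ≤ t → t ≤ k → ∀ j : Fin n, ∀ o : ι,
        o ∉ Finset.image (fun x : Fin n × ℕ => p x.1 x.2)
              (Finset.univ ×ˢ Finset.Ico 1 t) →
        (P j).le o (p j t) := by
  constructor
  · intro hout t
    induction t using Nat.strong_induction_on with
    | _ t ih =>
      intro ht1 htk
      exact greedyRound_of_forall_strictAlt_isOutcome hp hcard hout ht1 htk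
        fun i hi1 hit => ih i hit hi1 (by omega)
  · rintro hgreedy π ⟨σ, -, hσ, rfl⟩
    exact isOutcome_of_forall_greedyRound hp hcard hσ hgreedy

/-- A balanced allocation `M` is the outcome of every strict alternation
policy if and only if for every round `1 ≤ t ≤ k` and every agent `j`, the item `p j t`
is `j`'s most preferred item among the items not allocated by `M` in earlier rounds. -/
theorem necessary_assignment_strict_alternation
    {ι : Type} [Fintype ι] [DecidableEq ι] {n k : ℕ} (hn : 0 < n) (hk : 1 ≤ k)
    (hcard : Fintype.card ι = k * n)
    (P : Fin n → LinearOrder ι) (M : ι → Fin n) (hbal : BalancedAlloc k M)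
    (p : Fin n → ℕ → ι) (hp : IsRankingOf P k M p) :
    (∀ π : List (Fin n), StrictAlt n k π → IsOutcome P π M) ↔
      ∀ t : ℕ, 1 ≤ t → t ≤ k → ∀ j : Fin n, ∀ o : ι,
        o ∉ Finset.image (fun x : Fin n × ℕ => p x.1 x.2)
              (Finset.univ ×ˢ Finset.Ico 1 t) →
        (P j).le o (p j t) :=
  necessary_assignment_strict_alternation_general hcard P M p hp
end
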